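/- arXiv:1904.05590 — 2 statements merged into one kernel-verified Lean document; each statement's English description precedes it below -/
import Mathlib

section
/- For a real m×n matrix A and integer k with 1 ≤ k ≤ min(m,n), the equality ‖A‖_{k,2}^⋆ = ‖A‖_F holds if and only if rank(A) ≤ k. -/
open Matrix

/-- Singular values of a real `m × n` matrix, sorted in decreasing order
(indexed by `Fin n`; `σ i = sqrt` of the `i`-th largest eigenvalue of `Aᵀ * A`). -/
noncomputable def svalsDesc {m n : ℕ} (A : Matrix (Fin m) (Fin n) ℝ) : Fin n → ℝ :=
  fun i =>
    Real.sqrt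
      (((Matrix.isHermitian_conjTranspose_mul_self A).eigenvalues ∘
        Tuple.sort (Matrix.isHermitian_conjTranspose_mul_self A).eigenvalues) i.rev)

/-- Ky Fan 2-k-norm: `(∑_{i=1}^k σ_i(A)²)^{1/2}`. -/
noncomputable def kyFan2 {m n : ℕ} (k : ℕ) (A : Matrix (Fin m) (Fin n) ℝ) : ℝ :=
  Real.sqrt (∑ i ∈ Finset.univ.filter (fun i : Fin n => (i : ℕ) < k), (svalsDesc A i) ^ 2)

/-- Frobenius inner product `⟨A, B⟩ = trace (Aᵀ B)`. -/
noncomputable def frobInner {m n : ℕ} (A B : Matrix (Fin m) (Fin n) ℝ) : ℝ :=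
  ∑ i, ∑ j, A i j * B i j

/-- Frobenius norm. -/
noncomputable def frobNorm {m n : ℕ} (A : Matrix (Fin m) (Fin n) ℝ) : ℝ :=
  Real.sqrt (∑ i, ∑ j, (A i j) ^ 2)

/-- Dual Ky Fan 2-k-norm `‖A‖_{k,2}^⋆ = max {⟨A,X⟩ : ‖X‖_{k,2} ≤ 1}`. -/
noncomputable def kyFan2Dual {m n : ℕ} (k : ℕ) (A : Matrix (Fin m) (Fin n) ℝ) : ℝ :=
  sSup {c : ℝ | ∃ X : Matrix (Fin m) (Fin n) ℝ, kyFan2 k X ≤ 1 ∧ c = frobInner A X}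

/-- The linear map `𝒜` satisfies the restricted isometry inequality with constant `δ`
for all matrices of rank at most `r`. -/
def HasRIP {m n p : ℕ} (𝒜 : Matrix (Fin m) (Fin n) ℝ →ₗ[ℝ] EuclideanSpace ℝ (Fin p))
    (r : ℕ) (δ : ℝ) : Prop :=
  ∀ X : Matrix (Fin m) (Fin n) ℝ, X.rank ≤ r →
    (1 - δ) * frobNorm X ≤ ‖𝒜 X‖ ∧ ‖𝒜 X‖ ≤ (1 + δ) * frobNorm X


/-!
Let `λ₁ ≥ λ₂ ≥ ⋯` be the eigenvalues of `Aᵀ A`, so that `‖A‖_F² = ∑ λᵢ` and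
`‖A‖_{k,2}² = ∑_{i ≤ k} λᵢ`. Ky Fan's maximum principle identifies `‖X‖_{k,2}²` with the largest
value of `trace (Xᵀ X P)` over orthogonal projections `P` of trace at most `k`.

If `rank A ≤ k`, let `P` project onto the row space of `A`. Then
`⟨A, X⟩ = ⟨A, X P⟩ ≤ ‖A‖_F ‖X P‖_F` and `‖X P‖_F² = trace (Xᵀ X P) ≤ ‖X‖_{k,2}²`, so the dual norm
is at most `‖A‖_F`, which `X = A / ‖A‖_F` attains since `‖·‖_{k,2} ≤ ‖·‖_F`.

If `rank A > k`, then `λ_{k+1} > 0`, so `‖A‖_{k,2} < ‖A‖_F`, and `X = A / ‖A‖_{k,2}` gives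
`⟨A, X⟩ = ‖A‖_F² / ‖A‖_{k,2} > ‖A‖_F`.
-/

open Finset Unitary

theorem Finset.sum_mul_le_sum_of_threshold {ι : Type*} [Fintype ι] [DecidableEq ι] (s : Finset ι)
    {w t : ι → ℝ} {c : ℝ} (hc : 0 ≤ c) (hs : ∀ i ∈ s, c ≤ w i) (hsc : ∀ i ∉ s, w i ≤ c)
    (ht0 : ∀ i, 0 ≤ t i) (ht1 : ∀ i, t i ≤ 1) (hts : ∑ i, t i ≤ #s) :
    ∑ i, w i * t i ≤ ∑ i ∈ s, w i := by
  have hpoint : ∀ i,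
      w i * t i ≤ (if i ∈ s then w i else 0) + c * (t i - if i ∈ s then 1 else 0) := by
    intro i
    by_cases hi : i ∈ s
    · simp only [hi, if_true]
      nlinarith [hs i hi, ht1 i]
    · simp only [hi, if_false]
      nlinarith [hsc i hi, ht0 i]
  calc ∑ i, w i * t i
      ≤ ∑ i, ((if i ∈ s then w i else 0) + c * (t i - if i ∈ s then 1 else 0)) :=
        sum_le_sum fun i _ => hpoint i
    _ = ∑ i ∈ s, w i + c * (∑ i, t i - #s) := by
        simp [sum_add_distrib, ← mul_sum, sum_sub_distrib]
    _ ≤ ∑ i ∈ s, w i := by nlinarith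

theorem Fin.sum_mul_le_sum_val_lt_of_antitone {n : ℕ} (k : ℕ) {w t : Fin n → ℝ}
    (hw : Antitone w) (hw0 : ∀ i, 0 ≤ w i) (ht0 : ∀ i, 0 ≤ t i) (ht1 : ∀ i, t i ≤ 1)
    (hts : ∑ i, t i ≤ k) :
    ∑ i, w i * t i ≤ ∑ i : Fin n with i.val < k, w i := by
  by_cases hk : k < n
  · refine sum_mul_le_sum_of_threshold _ (hw0 ⟨k, hk⟩) (fun i hi => hw ?_) (fun i hi => hw ?_)
      ht0 ht1 ?_
    · simpa [Fin.le_def] using (mem_filter.1 hi).2.le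
    · simpa [Fin.le_def] using hi
    · simpa [Fin.card_filter_val_lt, hk.le] using hts
  · rw [filter_true_of_mem fun i _ => i.2.trans_le (not_lt.1 hk)]
    exact sum_le_sum fun i _ => mul_le_of_le_one_right (hw0 i) (ht1 i)

theorem IsStarProjection.diag_mem_Icc {ι : Type*} [Fintype ι] {Q : Matrix ι ι ℝ}
    (hQ : IsStarProjection Q) (i : ι) : Q i i ∈ Set.Icc 0 1 := by
  have hsq : Q i i = ∑ j, Q i j ^ 2 := by
    conv_lhs => rw [← hQ.isIdempotentElem.eq]
    rw [mul_apply]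
    refine sum_congr rfl fun j _ => ?_
    rw [sq]
    congr 1
    simpa using congrFun (congrFun hQ.isSelfAdjoint i) j
  have hle : Q i i ^ 2 ≤ Q i i :=
    hsq ▸ single_le_sum (f := fun j => Q i j ^ 2) (fun j _ => sq_nonneg _) (mem_univ i)
  have h0 : 0 ≤ Q i i := hsq ▸ sum_nonneg fun j _ => sq_nonneg _
  exact ⟨h0, by nlinarith⟩

lemma trace_conjStarAlgAut {ι R : Type*} [Fintype ι] [DecidableEq ι] [CommRing R] [StarRing R]
    (u : unitary (Matrix ι ι R)) (M : Matrix ι ι R) :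
    trace (conjStarAlgAut R _ u M) = trace M := by
  rw [conjStarAlgAut_apply, trace_mul_cycle, coe_star_mul_self, Matrix.one_mul]

lemma isStarProjection_diagonal_indicator {ι : Type*} [Fintype ι] [DecidableEq ι]
    (s : Finset ι) : IsStarProjection (diagonal fun j => if j ∈ s then (1 : ℝ) else 0) := by
  refine ⟨?_, ?_⟩
  · rw [IsIdempotentElem, diagonal_mul_diagonal]
    congr 1
    ext j
    split_ifs <;> simp
  · simp [IsSelfAdjoint, star_eq_conjTranspose]

section Frobenius

variable {m n : ℕ} (A : Matrix (Fin m) (Fin n) ℝ)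

lemma frobNorm_nonneg : 0 ≤ frobNorm A := Real.sqrt_nonneg _

lemma frobInner_eq_trace (B : Matrix (Fin m) (Fin n) ℝ) : frobInner A B = trace (Aᴴ * B) := by
  rw [frobInner, sum_comm]
  simp [trace, mul_apply]

lemma frobInner_self : frobInner A A = frobNorm A ^ 2 := by
  rw [frobNorm, Real.sq_sqrt (by positivity), frobInner]
  simp only [sq]

lemma frobInner_le_frobNorm_mul_frobNorm (B : Matrix (Fin m) (Fin n) ℝ) :
    frobInner A B ≤ frobNorm A * frobNorm B := by
  simp only [frobInner, frobNorm, ← Fintype.sum_prod_type']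
  exact Real.sum_mul_le_sqrt_mul_sqrt _ _ _

lemma frobInner_smul_right (c : ℝ) (B : Matrix (Fin m) (Fin n) ℝ) :
    frobInner A (c • B) = c * frobInner A B := by
  simp only [frobInner, Matrix.smul_apply, smul_eq_mul, mul_sum]
  exact sum_congr rfl fun _ _ => sum_congr rfl fun _ _ => by ring

lemma frobInner_mul_right (X : Matrix (Fin m) (Fin n) ℝ) (P : Matrix (Fin n) (Fin n) ℝ) :
    frobInner (A * P) X = frobInner A (X * Pᴴ) := by
  rw [frobInner_eq_trace, frobInner_eq_trace, conjTranspose_mul, Matrix.mul_assoc,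
    trace_mul_comm, Matrix.mul_assoc]

lemma frobNorm_mul_sq {P : Matrix (Fin n) (Fin n) ℝ} (hP : IsStarProjection P) :
    frobNorm (A * P) ^ 2 = trace (Aᴴ * A * P) := by
  rw [← frobInner_self, frobInner_eq_trace, conjTranspose_mul, ← star_eq_conjTranspose,
    hP.isSelfAdjoint, Matrix.mul_assoc, trace_mul_comm, Matrix.mul_assoc, Matrix.mul_assoc,
    hP.isIdempotentElem.eq, Matrix.mul_assoc]

end Frobenius

section Gram

variable {m n : ℕ} (A : Matrix (Fin m) (Fin n) ℝ)

noncomputable def gramEigenvalues : Fin n → ℝ :=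
  (isHermitian_conjTranspose_mul_self A).eigenvalues

noncomputable def gramEigenvectors : unitary (Matrix (Fin n) (Fin n) ℝ) :=
  (isHermitian_conjTranspose_mul_self A).eigenvectorUnitary

noncomputable def gramDescPerm : Equiv.Perm (Fin n) :=
  Fin.revPerm.trans (Tuple.sort (gramEigenvalues A))

noncomputable def gramEigenvaluesDesc (i : Fin n) : ℝ :=
  gramEigenvalues A (gramDescPerm A i)

lemma gram_eq_conj_diagonal :
    Aᴴ * A = conjStarAlgAut ℝ _ (gramEigenvectors A) (diagonal (gramEigenvalues A)) := by
  simpa [gramEigenvectors, gramEigenvalues, RCLike.ofReal_real_eq_id] using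
    (isHermitian_conjTranspose_mul_self A).spectral_theorem

lemma gramEigenvalues_nonneg (j : Fin n) : 0 ≤ gramEigenvalues A j :=
  (posSemidef_conjTranspose_mul_self A).eigenvalues_nonneg j

lemma gramEigenvaluesDesc_antitone : Antitone (gramEigenvaluesDesc A) := fun _ _ hij => by
  simpa [gramEigenvaluesDesc, gramDescPerm] using
    Tuple.monotone_sort (gramEigenvalues A) (Fin.rev_le_rev.mpr hij)

lemma sq_svalsDesc (i : Fin n) : svalsDesc A i ^ 2 = gramEigenvaluesDesc A i :=
  Real.sq_sqrt (gramEigenvalues_nonneg A _)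

lemma kyFan2_sq (k : ℕ) :
    kyFan2 k A ^ 2 = ∑ i : Fin n with i.val < k, gramEigenvaluesDesc A i := by
  rw [kyFan2, Real.sq_sqrt (sum_nonneg fun i _ => sq_nonneg _)]
  exact sum_congr rfl fun i _ => sq_svalsDesc A i

lemma frobNorm_sq_eq_sum_gramEigenvaluesDesc :
    frobNorm A ^ 2 = ∑ i, gramEigenvaluesDesc A i := by
  rw [← frobInner_self, frobInner_eq_trace,
    (isHermitian_conjTranspose_mul_self A).trace_eq_sum_eigenvalues]
  exact (Equiv.sum_comp (gramDescPerm A) _).symm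

lemma rank_eq_card_gramEigenvalues_ne_zero :
    A.rank = #{j | gramEigenvalues A j ≠ 0} := by
  rw [← rank_conjTranspose_mul_self,
    (isHermitian_conjTranspose_mul_self A).rank_eq_card_non_zero_eigs, Fintype.card_subtype]
  rfl

lemma rank_eq_card_gramEigenvaluesDesc_ne_zero :
    A.rank = #{i | gramEigenvaluesDesc A i ≠ 0} := by
  rw [rank_eq_card_gramEigenvalues_ne_zero, ← Fintype.card_subtype, ← Fintype.card_subtype]
  exact Fintype.card_congr ((gramDescPerm A).subtypeEquiv fun _ => Iff.rfl).symm

lemma gramEigenvaluesDesc_pos_of_lt_rank {i : Fin n} (hi : i.val < A.rank) :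
    0 < gramEigenvaluesDesc A i := by
  refine (gramEigenvalues_nonneg A _).lt_of_ne' fun hzero => hi.not_ge ?_
  have hsupp : ∀ j, gramEigenvaluesDesc A j ≠ 0 → j.val < i.val := fun j hj => by
    by_contra! hij
    exact hj (le_antisymm (hzero ▸ gramEigenvaluesDesc_antitone A (Fin.le_def.2 hij))
      (gramEigenvalues_nonneg A _))
  calc A.rank = #{j | gramEigenvaluesDesc A j ≠ 0} := rank_eq_card_gramEigenvaluesDesc_ne_zero A
    _ ≤ #{j : Fin n | j.val < i.val} := card_le_card fun j hj => by
        simpa using hsupp j (mem_filter.1 hj).2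
    _ ≤ i.val := by rw [Fin.card_filter_val_lt]; exact min_le_right _ _

end Gram

section SpectralProjection

variable {m n : ℕ}

noncomputable def gramSpectralProj (A : Matrix (Fin m) (Fin n) ℝ) (s : Finset (Fin n)) :
    Matrix (Fin n) (Fin n) ℝ :=
  conjStarAlgAut ℝ _ (gramEigenvectors A) (diagonal fun j => if j ∈ s then 1 else 0)

variable (A : Matrix (Fin m) (Fin n) ℝ) (s : Finset (Fin n))

lemma isStarProjection_gramSpectralProj : IsStarProjection (gramSpectralProj A s) :=
  (isStarProjection_diagonal_indicator s).map _

lemma trace_gramSpectralProj : trace (gramSpectralProj A s) = #s := by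
  rw [gramSpectralProj, trace_conjStarAlgAut, trace_diagonal]
  simp

lemma trace_gram_mul_gramSpectralProj :
    trace (Aᴴ * A * gramSpectralProj A s) = ∑ j ∈ s, gramEigenvalues A j := by
  rw [gram_eq_conj_diagonal, gramSpectralProj, ← map_mul, trace_conjStarAlgAut,
    diagonal_mul_diagonal, trace_diagonal]
  simp

lemma mul_gramSpectralProj (hs : ∀ j ∉ s, gramEigenvalues A j = 0) :
    A * gramSpectralProj A s = A := by
  have hcompl : Aᴴ * A * (1 - gramSpectralProj A s) = 0 := by
    rw [gram_eq_conj_diagonal, gramSpectralProj, ← map_one (conjStarAlgAut ℝ _ _), ← map_sub,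
      ← map_mul, ← diagonal_one, diagonal_sub, diagonal_mul_diagonal,
      map_eq_zero_iff _ (EquivLike.injective _), diagonal_eq_zero]
    ext j
    by_cases hj : j ∈ s <;> simp [hj, hs]
  rw [conjTranspose_mul_self_mul_eq_zero, Matrix.mul_sub, Matrix.mul_one, sub_eq_zero] at hcompl
  exact hcompl.symm

end SpectralProjection

section KyFan

variable {m n : ℕ} (k : ℕ)

lemma kyFan2_nonneg (X : Matrix (Fin m) (Fin n) ℝ) : 0 ≤ kyFan2 k X := Real.sqrt_nonneg _

/-- Ky Fan's maximum principle. In the eigenbasis of `Xᴴ X` the projection `P` has diagonal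
entries in `[0, 1]` summing to `trace P`; the eigenvalues weighted by them sum to at most the
`k` largest ones (bathtub principle, `Finset.sum_mul_le_sum_of_threshold`). -/
theorem trace_gram_mul_le_kyFan2_sq (X : Matrix (Fin m) (Fin n) ℝ)
    {P : Matrix (Fin n) (Fin n) ℝ} (hP : IsStarProjection P) (hPk : trace P ≤ k) :
    trace (Xᴴ * X * P) ≤ kyFan2 k X ^ 2 := by
  set u := gramEigenvectors X
  set Q := conjStarAlgAut ℝ _ (star u) P
  have hQ : IsStarProjection Q := hP.map _
  have hdiag : trace (Xᴴ * X * P) = ∑ j, gramEigenvalues X j * Q j j := by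
    rw [gram_eq_conj_diagonal, ← trace_conjStarAlgAut (star u), map_mul,
      ← conjStarAlgAut_mul_apply, star_mul_self, map_one, StarAlgEquiv.one_apply]
    simp only [trace, Matrix.diag, diagonal_mul]
    rfl
  have htrQ : ∑ i, Q (gramDescPerm X i) (gramDescPerm X i) ≤ k := by
    rw [Equiv.sum_comp (gramDescPerm X) fun j => Q j j]
    exact (trace_conjStarAlgAut (star u) P).trans_le hPk
  rw [hdiag, kyFan2_sq, ← Equiv.sum_comp (gramDescPerm X)]
  exact Fin.sum_mul_le_sum_val_lt_of_antitone k (gramEigenvaluesDesc_antitone X)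
    (fun _ => gramEigenvalues_nonneg X _) (fun _ => (hQ.diag_mem_Icc _).1)
    (fun _ => (hQ.diag_mem_Icc _).2) htrQ

theorem exists_isStarProjection_trace_gram_mul_eq_kyFan2_sq (X : Matrix (Fin m) (Fin n) ℝ) :
    ∃ P : Matrix (Fin n) (Fin n) ℝ, IsStarProjection P ∧ trace P ≤ k ∧
      trace (Xᴴ * X * P) = kyFan2 k X ^ 2 := by
  set s := ({i : Fin n | i.val < k} : Finset (Fin n)).map (gramDescPerm X).toEmbedding
  refine ⟨gramSpectralProj X s, isStarProjection_gramSpectralProj X s, ?_, ?_⟩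
  · rw [trace_gramSpectralProj, card_map, Fin.card_filter_val_lt]
    exact_mod_cast min_le_right n k
  · rw [trace_gram_mul_gramSpectralProj, sum_map, kyFan2_sq]
    rfl

/-- By the maximum principle `kyFan2 k X ^ 2` is the largest `trace (Xᴴ X P)`, which scales by
`c ^ 2`. -/
theorem kyFan2_smul (c : ℝ) (X : Matrix (Fin m) (Fin n) ℝ) :
    kyFan2 k (c • X) = |c| * kyFan2 k X := by
  have hgram : ∀ P : Matrix (Fin n) (Fin n) ℝ,
      trace ((c • X)ᴴ * (c • X) * P) = c ^ 2 * trace (Xᴴ * X * P) := fun P => by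
    simp [Matrix.smul_mul, Matrix.mul_smul, smul_smul, trace_smul, sq]
  obtain ⟨P, hP, hPk, hcX⟩ := exists_isStarProjection_trace_gram_mul_eq_kyFan2_sq k (c • X)
  obtain ⟨R, hR, hRk, hX⟩ := exists_isStarProjection_trace_gram_mul_eq_kyFan2_sq k X
  have hle : kyFan2 k (c • X) ^ 2 ≤ (|c| * kyFan2 k X) ^ 2 := by
    rw [← hcX, hgram, mul_pow, sq_abs]
    exact mul_le_mul_of_nonneg_left (trace_gram_mul_le_kyFan2_sq k X hP hPk) (sq_nonneg c)
  have hge : (|c| * kyFan2 k X) ^ 2 ≤ kyFan2 k (c • X) ^ 2 := by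
    rw [mul_pow, sq_abs, ← hX, ← hgram]
    exact trace_gram_mul_le_kyFan2_sq k (c • X) hR hRk
  exact (sq_eq_sq₀ (kyFan2_nonneg k _) (by positivity [kyFan2_nonneg k X])).1 (hle.antisymm hge)

lemma kyFan2_le_frobNorm (X : Matrix (Fin m) (Fin n) ℝ) : kyFan2 k X ≤ frobNorm X := by
  refine (pow_le_pow_iff_left₀ (kyFan2_nonneg k X) (frobNorm_nonneg X) two_ne_zero).1 ?_
  rw [kyFan2_sq, frobNorm_sq_eq_sum_gramEigenvaluesDesc]
  exact sum_le_sum_of_subset_of_nonneg (filter_subset _ _)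
    fun _ _ _ => gramEigenvalues_nonneg X _

lemma gramEigenvaluesDesc_le_kyFan2_sq (hk : 1 ≤ k) (X : Matrix (Fin m) (Fin n) ℝ) (i : Fin n) :
    gramEigenvaluesDesc X i ≤ kyFan2 k X ^ 2 := by
  have hfirst : (⟨0, i.pos⟩ : Fin n) ∈ ({j : Fin n | j.val < k} : Finset (Fin n)) :=
    mem_filter.2 ⟨mem_univ _, hk⟩
  rw [kyFan2_sq]
  exact (gramEigenvaluesDesc_antitone X (Fin.le_def.2 (Nat.zero_le _))).trans
    (single_le_sum (fun _ _ => gramEigenvalues_nonneg X _) hfirst)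

lemma frobNorm_le_sqrt_mul_kyFan2 (hk : 1 ≤ k) (X : Matrix (Fin m) (Fin n) ℝ) :
    frobNorm X ≤ √n * kyFan2 k X := by
  refine (pow_le_pow_iff_left₀ (frobNorm_nonneg X) (by positivity [kyFan2_nonneg k X])
    two_ne_zero).1 ?_
  rw [frobNorm_sq_eq_sum_gramEigenvaluesDesc, mul_pow, Real.sq_sqrt n.cast_nonneg]
  simpa using sum_le_sum fun i (_ : i ∈ univ) => gramEigenvaluesDesc_le_kyFan2_sq k hk X i

variable {k} (A : Matrix (Fin m) (Fin n) ℝ)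

lemma kyFan2_pos (hk : 1 ≤ k) (hA : 0 < A.rank) : 0 < kyFan2 k A := by
  have hn : 0 < n := hA.trans_le A.rank_le_width
  have hsq := (gramEigenvaluesDesc_pos_of_lt_rank A (i := ⟨0, hn⟩) hA).trans_le
    (gramEigenvaluesDesc_le_kyFan2_sq k hk A _)
  exact lt_of_pow_lt_pow_left₀ 2 (kyFan2_nonneg k A) (by rwa [zero_pow two_ne_zero])

lemma kyFan2_lt_frobNorm_of_lt_rank (h : k < A.rank) : kyFan2 k A < frobNorm A := by
  have hkn : k < n := h.trans_le A.rank_le_width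
  have htail : gramEigenvaluesDesc A ⟨k, hkn⟩ ≤
      ∑ i : Fin n with ¬ i.val < k, gramEigenvaluesDesc A i :=
    single_le_sum (fun _ _ => gramEigenvalues_nonneg A _) (by simp)
  refine lt_of_pow_lt_pow_left₀ 2 (frobNorm_nonneg A) ?_
  rw [kyFan2_sq, frobNorm_sq_eq_sum_gramEigenvaluesDesc,
    ← sum_filter_add_sum_filter_not univ fun i : Fin n => i.val < k]
  linarith [gramEigenvaluesDesc_pos_of_lt_rank A (i := ⟨k, hkn⟩) h]

end KyFan

section Dual

variable {m n k : ℕ} (A : Matrix (Fin m) (Fin n) ℝ)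

theorem frobInner_le_frobNorm_of_rank_le (hA : A.rank ≤ k) {X : Matrix (Fin m) (Fin n) ℝ}
    (hX : kyFan2 k X ≤ 1) : frobInner A X ≤ frobNorm A := by
  -- `P` is the orthogonal projection onto the row space of `A`.
  set P := gramSpectralProj A {j | gramEigenvalues A j ≠ 0}
  have hP : IsStarProjection P := isStarProjection_gramSpectralProj A _
  have hAP : A * P = A := mul_gramSpectralProj A _ fun j hj => by simpa using hj
  have hPk : trace P ≤ k := by
    rw [trace_gramSpectralProj, ← rank_eq_card_gramEigenvalues_ne_zero]
    exact_mod_cast hA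
  have hXP : frobNorm (X * P) ≤ 1 := by
    refine (pow_le_one_iff_of_nonneg (frobNorm_nonneg _) two_ne_zero).1 ?_
    rw [frobNorm_mul_sq X hP]
    exact (trace_gram_mul_le_kyFan2_sq k X hP hPk).trans (pow_le_one₀ (kyFan2_nonneg k X) hX)
  calc frobInner A X = frobInner A (X * P) := by
        conv_rhs => rw [← hP.isSelfAdjoint, star_eq_conjTranspose, ← frobInner_mul_right, hAP]
    _ ≤ frobNorm A * frobNorm (X * P) := frobInner_le_frobNorm_mul_frobNorm A _
    _ ≤ frobNorm A := mul_le_of_le_one_right (frobNorm_nonneg A) hXP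

theorem kyFan2Dual_eq_frobNorm_of_rank_le (hA : A.rank ≤ k) : kyFan2Dual k A = frobNorm A := by
  refine IsGreatest.csSup_eq ⟨⟨(frobNorm A)⁻¹ • A, ?_, ?_⟩, ?_⟩
  · rw [kyFan2_smul, abs_inv, abs_of_nonneg (frobNorm_nonneg A)]
    exact (mul_le_mul_of_nonneg_left (kyFan2_le_frobNorm k A)
      (inv_nonneg.2 (frobNorm_nonneg A))).trans inv_mul_le_one
  · rw [frobInner_smul_right, frobInner_self, sq, ← mul_assoc, inv_mul_mul_self]
  · rintro _ ⟨X, hX, rfl⟩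
    exact frobInner_le_frobNorm_of_rank_le A hA hX

theorem frobNorm_lt_kyFan2Dual_of_lt_rank (hk : 1 ≤ k) (hA : k < A.rank) :
    frobNorm A < kyFan2Dual k A := by
  set t := kyFan2 k A
  have ht : 0 < t := kyFan2_pos A hk (by omega)
  have hlt : t < frobNorm A := kyFan2_lt_frobNorm_of_lt_rank A hA
  have hbdd : BddAbove {c | ∃ X, kyFan2 k X ≤ 1 ∧ c = frobInner A X} := by
    refine ⟨frobNorm A * √n, ?_⟩
    rintro _ ⟨X, hX, rfl⟩
    calc frobInner A X ≤ frobNorm A * frobNorm X := frobInner_le_frobNorm_mul_frobNorm A X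
      _ ≤ frobNorm A * (√n * 1) := by
        gcongr
        · exact frobNorm_nonneg A
        · exact (frobNorm_le_sqrt_mul_kyFan2 k hk X).trans (by gcongr)
      _ = frobNorm A * √n := by rw [mul_one]
  calc frobNorm A < t⁻¹ * frobNorm A ^ 2 := by
        rw [lt_inv_mul_iff₀ ht, sq]
        exact mul_lt_mul_of_pos_right hlt (ht.trans hlt)
    _ = frobInner A (t⁻¹ • A) := by rw [frobInner_smul_right, frobInner_self]
    _ ≤ kyFan2Dual k A := le_csSup hbdd
        ⟨t⁻¹ • A, by rw [kyFan2_smul, abs_inv, abs_of_pos ht, inv_mul_cancel₀ ht.ne'], rfl⟩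

end Dual

theorem kyFan2Dual_eq_frobenius_iff_rank_le_general {m n : ℕ} (A : Matrix (Fin m) (Fin n) ℝ)
    (k : ℕ) (hk1 : 1 ≤ k) :
    kyFan2Dual k A = frobNorm A ↔ A.rank ≤ k :=
  ⟨fun h => not_lt.1 fun hlt => (frobNorm_lt_kyFan2Dual_of_lt_rank A hk1 hlt).ne' h,
    kyFan2Dual_eq_frobNorm_of_rank_le A⟩

/-- `‖A‖_{k,2}^⋆ = ‖A‖_F ↔ rank A ≤ k`. -/
theorem kyFan2Dual_eq_frobenius_iff_rank_le {m n : ℕ} (A : Matrix (Fin m) (Fin n) ℝ)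
    (k : ℕ) (hk1 : 1 ≤ k) (hk : k ≤ min m n) :
    kyFan2Dual k A = frobNorm A ↔ A.rank ≤ k :=
  kyFan2Dual_eq_frobenius_iff_rank_le_general A k hk1
end

section
/- Let 𝒜 : ℝ^{m×n} → ℝ^p be a linear map whose 2k-restricted isometry constant satisfies δ_{2k}(𝒜) < 1. If X₀ satisfies 𝒜(X₀) = b and rank(X₀) ≤ k, then X₀ is the unique matrix of rank at most k satisfying 𝒜(X) = b. -/
open Matrix

/-!
Two rank-`≤ k` solutions differ by a matrix of rank `≤ 2k` in the kernel of `𝒜`. The lower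
restricted isometry bound with `δ < 1` forces its Frobenius norm to vanish.
-/

theorem Matrix.rank_add_le {m n K : Type*} [Finite m] [Fintype n] [Field K]
    (A B : Matrix m n K) : (A + B).rank ≤ A.rank + B.rank := by
  rw [rank, mulVecLin_add]
  exact (Submodule.finrank_mono (LinearMap.range_add_le _ _)).trans
    (Submodule.finrank_add_le_finrank_add_finrank _ _)

theorem Matrix.rank_neg {m n K : Type*} [Fintype n] [Field K] (A : Matrix m n K) :
    (-A).rank = A.rank := by
  have : (-A).mulVecLin = -A.mulVecLin := by
    ext v
    simp
  rw [rank, rank, this, LinearMap.range_neg]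

theorem Matrix.rank_sub_le {m n K : Type*} [Finite m] [Fintype n] [Field K]
    (A B : Matrix m n K) : (A - B).rank ≤ A.rank + B.rank := by
  simpa only [sub_eq_add_neg, rank_neg] using rank_add_le A (-B)

theorem frobNorm_eq_zero_iff {m n : ℕ} {A : Matrix (Fin m) (Fin n) ℝ} :
    frobNorm A = 0 ↔ A = 0 := by
  rw [frobNorm, Real.sqrt_eq_zero (by positivity),
    Fintype.sum_eq_zero_iff_of_nonneg fun _ => by positivity, ← Matrix.ext_iff]
  simp only [funext_iff, Pi.zero_apply, Matrix.zero_apply,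
    Fintype.sum_eq_zero_iff_of_nonneg fun _ => sq_nonneg _, sq_eq_zero_iff]

theorem frobNorm_pos {m n : ℕ} {A : Matrix (Fin m) (Fin n) ℝ} (hA : A ≠ 0) :
    0 < frobNorm A :=
  (Real.sqrt_nonneg _).lt_of_ne' (frobNorm_eq_zero_iff.not.2 hA)

theorem HasRIP.eq_zero_of_map_eq_zero {m n p r : ℕ}
    {𝒜 : Matrix (Fin m) (Fin n) ℝ →ₗ[ℝ] EuclideanSpace ℝ (Fin p)} {δ : ℝ}
    (hRIP : HasRIP 𝒜 r δ) (hδ : δ < 1) {X : Matrix (Fin m) (Fin n) ℝ} (hX : X.rank ≤ r)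
    (hker : 𝒜 X = 0) : X = 0 := by
  by_contra hne
  have hlower := (hRIP X hX).1
  rw [hker, norm_zero] at hlower
  linarith [mul_pos (sub_pos.2 hδ) (frobNorm_pos hne)]

theorem unique_lowrank_solution_general {m n p k : ℕ}
    (𝒜 : Matrix (Fin m) (Fin n) ℝ →ₗ[ℝ] EuclideanSpace ℝ (Fin p))
    (hδ : ∃ δ : ℝ, δ < 1 ∧ HasRIP 𝒜 (2 * k) δ)
    (b : EuclideanSpace ℝ (Fin p))
    (X₀ : Matrix (Fin m) (Fin n) ℝ) (hA : 𝒜 X₀ = b) (hr : X₀.rank ≤ k) :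
    ∀ X : Matrix (Fin m) (Fin n) ℝ, 𝒜 X = b → X.rank ≤ k → X = X₀ := by
  intro X hAX hrX
  obtain ⟨δ, hδ1, hRIP⟩ := hδ
  have hker : 𝒜 (X - X₀) = 0 := by rw [map_sub, hAX, hA, sub_self]
  have hrank : (X - X₀).rank ≤ 2 * k := (rank_sub_le X X₀).trans (by omega)
  exact sub_eq_zero.1 (hRIP.eq_zero_of_map_eq_zero hδ1 hrank hker)

/-- if `δ_{2k}(𝒜) < 1`, a rank-≤k solution of `𝒜 X = b` is unique. -/
theorem unique_lowrank_solution {m n p k : ℕ} (hk1 : 1 ≤ k) (hk : k ≤ min m n)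
    (𝒜 : Matrix (Fin m) (Fin n) ℝ →ₗ[ℝ] EuclideanSpace ℝ (Fin p))
    (hδ : ∃ δ : ℝ, δ < 1 ∧ HasRIP 𝒜 (2 * k) δ)
    (b : EuclideanSpace ℝ (Fin p))
    (X₀ : Matrix (Fin m) (Fin n) ℝ) (hA : 𝒜 X₀ = b) (hr : X₀.rank ≤ k) :
    ∀ X : Matrix (Fin m) (Fin n) ℝ, 𝒜 X = b → X.rank ≤ k → X = X₀ :=
  unique_lowrank_solution_general 𝒜 hδ b X₀ hA hr
end
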